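/- arXiv:2403.13773 — 7 statements merged into one kernel-verified Lean document; each statement's English description precedes it below -/
import Mathlib

section
/- Given a finite set X with n ≥ 2 elements and a fixed linear order ▷ on X, the maximum cardinality of a set of linear orders on X that can be enumerated to satisfy the single-crossing property with respect to ▷ is binomial(n, 2) + 1. -/
open scoped Classical

abbrev Pref (X : Type*) := {r : X → X → Prop // IsStrictTotalOrder X r}

variable {X : Type*} [Fintype X] [DecidableEq X]

/-- `≻ ∈ L(x,A)`: `x` is ranked above all other elements of `A` and
below all elements of `X \ A`. -/
def memL (r : X → X → Prop) (x : X) (A : Finset X) : Prop :=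
  x ∈ A ∧ (∀ y ∈ A, y ≠ x → r x y) ∧ ∀ z, z ∉ A → r z x

/-- The 0-1 vector of the random choice rule induced by a single order:
`pVec r (x, A) = 1` iff `x` is `r`-maximal in `A`. -/
noncomputable def pVec (r : X → X → Prop) : X × Finset X → ℝ :=
  fun z => if z.1 ∈ z.2 ∧ ∀ y ∈ z.2, y ≠ z.1 → r z.1 y then 1 else 0

/-- `q_≻` vector: indicator of `≻ ∈ L(x,A)`. -/
noncomputable def qVec (r : X → X → Prop) : X × Finset X → ℝ :=
  fun z => if memL r z.1 z.2 then 1 else 0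

/-- `ν` is a probability distribution over the model `M`. -/
def IsDist (M : Finset (Pref X)) (ν : Pref X → ℝ) : Prop :=
  (∀ r, 0 ≤ ν r) ∧ (∀ r, r ∉ M → ν r = 0) ∧ ∑ r ∈ M, ν r = 1

/-- The random choice rule induced by `ν` over `M`. -/
noncomputable def pRCR (M : Finset (Pref X)) (ν : Pref X → ℝ) : X × Finset X → ℝ :=
  fun z => ∑ r ∈ M, ν r * pVec r.1 z

/-- The model `M` is identified. -/
def Identified (M : Finset (Pref X)) : Prop :=
  ∀ ν ν' : Pref X → ℝ, IsDist M ν → IsDist M ν' → pRCR M ν = pRCR M ν' → ν = ν'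

/-- Edge decomposability. -/
def EdgeDecomposable (M : Finset (Pref X)) : Prop :=
  ∀ N ⊆ M, N.Nonempty →
    ∃ r ∈ N, ∃ (x : X) (A : Finset X), x ∈ A ∧
      ∀ s ∈ N, (memL s.1 x A ↔ s = r)

noncomputable instance : Fintype (Pref X) := Fintype.ofFinite _

/-- A finset of preferences admits an enumeration satisfying the single-crossing
property with respect to the exogenous order on `X` (where `x ▷ y` is `y < x`). -/
def SingleCrossing [LinearOrder X] (S : Finset (Pref X)) : Prop :=
  ∃ e : Fin S.card ≃ {r // r ∈ S},
    ∀ x y : X, y < x → ∀ i j : Fin S.card, i ≤ j →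
      ((e i) : Pref X).1 x y → ((e j) : Pref X).1 x y

-- nat layer --
lemma choose2_succ (m : ℕ) : (m+1).choose 2 = m.choose 2 + m := by
  rw [Nat.choose_succ_succ, Nat.choose_one_right, Nat.add_comm]

lemma choose2_lt {b a : ℕ} (hb : 1 ≤ b) (h : b < a) : b.choose 2 < a.choose 2 := by
  calc b.choose 2 < b.choose 2 + b := by omega
    _ = (b+1).choose 2 := (choose2_succ b).symm
    _ ≤ a.choose 2 := Nat.choose_le_choose 2 h

/-- `T a b` = position of pair `(a,b)`, `b < a`, in the lex enumeration. -/
def T (a b : ℕ) : ℕ := a.choose 2 + b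

lemma T_lt_choose {a b n : ℕ} (hba : b < a) (han : a < n) : T a b < n.choose 2 := by
  have h1 : T a b < (a+1).choose 2 := by rw [choose2_succ]; unfold T; omega
  exact lt_of_lt_of_le h1 (Nat.choose_le_choose 2 han)

lemma T_mono1 {a b c : ℕ} (h1 : c < b) (h2 : b < a) : T b c < T a c := by
  unfold T; have := choose2_lt (by omega : 1 ≤ b) h2; omega

lemma T_mono2 {a b c : ℕ} (h1 : c < b) : T a c < T a b := by
  unfold T; omega

lemma T_inj {a b a' b' : ℕ} (hb : b < a) (hb' : b' < a') (h : T a b = T a' b') :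
    a = a' ∧ b = b' := by
  unfold T at h
  rcases lt_trichotomy a a' with hlt | he | hgt
  · have h1 : a.choose 2 + b < (a+1).choose 2 := by rw [choose2_succ]; omega
    have h2 : (a+1).choose 2 ≤ a'.choose 2 := Nat.choose_le_choose 2 hlt
    omega
  · subst he; omega
  · have h1 : a'.choose 2 + b' < (a'+1).choose 2 := by rw [choose2_succ]; omega
    have h2 : (a'+1).choose 2 ≤ a.choose 2 := Nat.choose_le_choose 2 hgt
    omega

lemma T_surj {n k : ℕ} (hk : k < n.choose 2) : ∃ a b, b < a ∧ a < n ∧ T a b = k := by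
  have hn2 : 2 ≤ n := by
    by_contra h
    interval_cases n <;> simp_all
  set P : ℕ → Prop := fun a => a.choose 2 ≤ k with hPdef
  have : DecidablePred P := fun a => by unfold P; infer_instance
  set a := Nat.findGreatest P n with ha
  have hP : P a := Nat.findGreatest_spec (m := 1) (by omega) (by simp [hPdef])
  have hPk : a.choose 2 ≤ k := hP
  have han : a < n := by
    rcases Nat.lt_or_ge a n with h | h
    · exact h
    · exfalso; have := Nat.choose_le_choose 2 h; omega
  have hnext' : ¬ P (a+1) :=
    Nat.findGreatest_is_greatest (k := a+1) (n := n) (by omega) (by omega)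
  have hnext : ¬ (a+1).choose 2 ≤ k := hnext'
  rw [choose2_succ] at hnext
  exact ⟨a, k - a.choose 2, by omega, han, by unfold T; omega⟩

-- X layer --
section Tau
variable [LinearOrder X]

/-- The position of the pair `(x,y)` (intended `y < x`). -/
noncomputable def tau (x y : X) : ℕ :=
  T ((monoEquivOfFin X rfl).symm x) ((monoEquivOfFin X rfl).symm y)

lemma psi_lt {x y : X} (h : y < x) :
    ((monoEquivOfFin X rfl).symm y : ℕ) < ((monoEquivOfFin X rfl).symm x : ℕ) := by
  exact (monoEquivOfFin X rfl).symm.strictMono h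

lemma tau_lt_choose {x y : X} (h : y < x) : tau x y < (Fintype.card X).choose 2 :=
  T_lt_choose (psi_lt h) (Fin.is_lt _)

lemma tau_mono1 {x y z : X} (h1 : z < y) (h2 : y < x) : tau y z < tau x z :=
  T_mono1 (psi_lt h1) (psi_lt h2)

lemma tau_mono2 {x y z : X} (h1 : z < y) : tau x z < tau x y :=
  T_mono2 (psi_lt h1)

lemma tau_inj {x y x' y' : X} (h : y < x) (h' : y' < x') (he : tau x y = tau x' y') :
    x = x' ∧ y = y' := by
  obtain ⟨ha, hb⟩ := T_inj (psi_lt h) (psi_lt h') he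
  constructor
  · have := (monoEquivOfFin X rfl).symm.injective (Fin.ext ha)
    exact this
  · exact (monoEquivOfFin X rfl).symm.injective (Fin.ext hb)

lemma tau_surj {k : ℕ} (hk : k < (Fintype.card X).choose 2) :
    ∃ x y : X, y < x ∧ tau x y = k := by
  obtain ⟨a, b, hba, han, hT⟩ := T_surj hk
  have hbn : b < Fintype.card X := lt_trans hba han
  refine ⟨monoEquivOfFin X rfl ⟨a, han⟩, monoEquivOfFin X rfl ⟨b, hbn⟩, ?_, ?_⟩
  · exact (monoEquivOfFin X rfl).strictMono (by exact hba)
  · unfold tau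
    simp [hT]

/-- The `k`-th order in the single-crossing family. -/
def Rk (k : ℕ) (x y : X) : Prop := (y < x ∧ tau x y < k) ∨ (x < y ∧ k ≤ tau y x)

lemma Rk_sto (k : ℕ) : IsStrictTotalOrder X (Rk k) := by
  refine { trichotomous := ?_, irrefl := ?_, trans := ?_ }
  · -- trichotomous
    intro x y hn1 hn2
    rcases lt_trichotomy x y with h | h | h
    · rcases Nat.lt_or_ge (tau y x) k with h2 | h2
      · exact absurd (Or.inl ⟨h, h2⟩ : Rk k y x) hn2
      · exact absurd (Or.inr ⟨h, h2⟩ : Rk k x y) hn1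
    · exact h
    · rcases Nat.lt_or_ge (tau x y) k with h2 | h2
      · exact absurd (Or.inl ⟨h, h2⟩ : Rk k x y) hn1
      · exact absurd (Or.inr ⟨h, h2⟩ : Rk k y x) hn2
  · -- irrefl
    intro x h
    rcases h with ⟨h, _⟩ | ⟨h, _⟩ <;> exact lt_irrefl x h
  · -- trans
    intro x y z hxy hyz
    rcases hxy with ⟨h1, h2⟩ | ⟨h1, h2⟩ <;> rcases hyz with ⟨h3, h4⟩ | ⟨h3, h4⟩
    · -- y<x, τxy<k ; z<y, τyz<k
      exact Or.inl ⟨lt_trans h3 h1, lt_trans (tau_mono2 h3) h2⟩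
    · -- y<x, τxy<k ; y<z, k≤τzy
      rcases lt_trichotomy z x with h5 | h5 | h5
      · -- y<z<x : τ z y < τ x y < k, contra
        exact absurd (lt_trans (tau_mono1 h3 h5) h2) (not_lt.mpr h4)
      · subst h5; omega
      · -- y<x<z : k ≤ τ z y < τ z x
        exact Or.inr ⟨h5, le_of_lt (lt_of_le_of_lt h4 (tau_mono2 h1))⟩
    · -- x<y, k≤τyx ; z<y, τyz<k
      rcases lt_trichotomy z x with h5 | h5 | h5
      · -- z<x<y : τ x z < τ y z < k
        exact Or.inl ⟨h5, lt_trans (tau_mono1 h5 h1) h4⟩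
      · subst h5
        exact absurd (lt_of_lt_of_le h4 h2) (lt_irrefl _)
      · -- x<z<y : τ y x < τ y z < k contra k ≤ τ y x
        exact absurd (lt_of_le_of_lt h2 (lt_of_lt_of_le (tau_mono2 h5) (le_of_lt h4))) (lt_irrefl _)
    · -- x<y, k≤τyx ; y<z, k≤τzy
      exact Or.inr ⟨lt_trans h1 h3, le_trans h2 (le_of_lt (tau_mono1 h1 h3))⟩

/-- The `k`-th preference. -/
noncomputable def Pk (k : ℕ) : Pref X := ⟨Rk k, Rk_sto k⟩

lemma Pk_injOn {k k' : ℕ} (hk : k ≤ (Fintype.card X).choose 2)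
    (hk' : k' ≤ (Fintype.card X).choose 2) (hne : k ≠ k') :
    (Pk k : Pref X) ≠ Pk k' := by
  wlog hlt : k < k' generalizing k k'
  · exact (this hk' hk (Ne.symm hne) (by omega)).symm
  obtain ⟨x, y, hyx, htau⟩ := tau_surj (X := X) (k := k) (by omega)
  intro heq
  have hR : Rk (X := X) k = Rk k' := congrArg Subtype.val heq
  have h1 : Rk k' x y := Or.inl ⟨hyx, by omega⟩
  have h2 : ¬ Rk k x y := by
    intro h
    rcases h with ⟨_, h⟩ | ⟨h, _⟩
    · omega
    · exact absurd h (not_lt.mpr (le_of_lt hyx))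
  rw [hR] at h2
  exact h2 h1

end Tau

section Main
variable [LinearOrder X]

lemma switch_pair {r s : Pref X} (hne : r.1 ≠ s.1)
    (hcross : ∀ x y : X, y < x → r.1 x y → s.1 x y) :
    ∃ x y : X, y < x ∧ ¬ r.1 x y ∧ s.1 x y := by
  rw [Function.ne_iff] at hne
  obtain ⟨x, hx⟩ := hne
  rw [Function.ne_iff] at hx
  obtain ⟨y, hxy⟩ := hx
  by_cases hr : r.1 x y
  · have hs : ¬ s.1 x y := fun hs => hxy (propext ⟨fun _ => hs, fun _ => hr⟩)
    have hxney : x ≠ y := by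
      rintro rfl; exact r.2.irrefl x hr
    rcases lt_or_gt_of_ne hxney with h | h
    · -- x < y : use pair (y, x)
      have hsyx : s.1 y x := by
        rcases (haveI := s.2; trichotomous_of s.1 y x) with h' | h' | h'
        · exact h'
        · exact absurd h'.symm hxney
        · exact absurd h' hs
      have hnr : ¬ r.1 y x := fun h' => r.2.irrefl x (r.2.trans _ _ _ hr h')
      exact ⟨y, x, h, hnr, hsyx⟩
    · exact absurd (hcross x y h hr) hs
  · have hs : s.1 x y := by
      by_contra hs
      exact hxy (propext ⟨fun h => absurd h hr, fun h => absurd h hs⟩)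
    have hxney : x ≠ y := by
      rintro rfl; exact s.2.irrefl x hs
    rcases lt_or_gt_of_ne hxney with h | h
    · -- x < y : r must rank y over x; single crossing forces s y x, contradiction
      have hr' : r.1 y x := by
        rcases (haveI := r.2; trichotomous_of r.1 y x) with h' | h' | h'
        · exact h'
        · exact absurd h'.symm hxney
        · exact absurd h' hr
      have := hcross y x h hr'
      exact absurd (s.2.trans x y x hs this) (s.2.irrefl x)
    · exact ⟨x, y, h, hr, hs⟩

end Main

/-- The maximum cardinality of a single-crossing set of linear orders on `X`
is `n.choose 2 + 1`. -/
theorem stmt_6 [LinearOrder X] (hn : 2 ≤ Fintype.card X) :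
    IsGreatest {k | ∃ S : Finset (Pref X), SingleCrossing S ∧ S.card = k}
      (Nat.choose (Fintype.card X) 2 + 1) := by
  set N := (Fintype.card X).choose 2 with hN
  constructor
  · -- membership : construct the family Pk 0, ..., Pk N
    set S : Finset (Pref X) := (Finset.range (N+1)).image (fun k => Pk (X := X) k) with hS
    have hinj : Set.InjOn (fun k => Pk (X := X) k) ↑(Finset.range (N+1)) := by
      intro a ha b hb hab
      simp only [Finset.coe_range, Set.mem_Iio] at ha hb
      by_contra hne
      exact Pk_injOn (by omega) (by omega) hne hab
    have hcard : S.card = N + 1 := by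
      rw [hS, Finset.card_image_of_injOn hinj, Finset.card_range]
    refine ⟨S, ?_, hcard⟩
    have hmem : ∀ k : Fin (N+1), Pk (X := X) k.1 ∈ S := fun k =>
      Finset.mem_image_of_mem _ (Finset.mem_range.mpr k.isLt)
    set f : Fin (N+1) → {r // r ∈ S} := fun k => ⟨Pk k.1, hmem k⟩ with hf
    have hfbij : Function.Bijective f := by
      constructor
      · intro a b hab
        have h1 : Pk (X := X) a.1 = Pk b.1 := congrArg Subtype.val hab
        have h2 := hinj (by simpa using a.isLt) (by simpa using b.isLt) h1
        exact Fin.ext h2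
      · rintro ⟨r, hr⟩
        rw [hS, Finset.mem_image] at hr
        obtain ⟨k, hk, rfl⟩ := hr
        exact ⟨⟨k, Finset.mem_range.mp hk⟩, rfl⟩
    refine ⟨(finCongr (by rw [hcard])).trans (Equiv.ofBijective f hfbij), ?_⟩
    intro x y hyx i j hij hri
    have hri' : Rk (i.1 : ℕ) x y := hri
    have hgoal : Rk (j.1 : ℕ) x y := by
      rcases hri' with ⟨h1, h2⟩ | ⟨h1, _⟩
      · exact Or.inl ⟨h1, lt_of_lt_of_le h2 hij⟩
      · exact absurd h1 (not_lt.mpr (le_of_lt hyx))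
    exact hgoal
  · -- upper bound
    rintro k ⟨S, ⟨e, hsc⟩, rfl⟩
    rcases Nat.eq_zero_or_pos S.card with h0 | hpos
    · omega
    by_contra hbig
    push_neg at hbig
    have key : ∀ i : Fin (S.card - 1), ∃ x y : X, y < x ∧
        ¬ ((e ⟨i.1, by omega⟩ : Pref X)).1 x y ∧ ((e ⟨i.1+1, by omega⟩ : Pref X)).1 x y := by
      intro i
      have hi1 : i.1 < S.card := by omega
      have hi2 : i.1 + 1 < S.card := by omega
      apply switch_pair
      · intro h
        have h2 : (e ⟨i.1, hi1⟩ : {r // r ∈ S}) = e ⟨i.1+1, hi2⟩ := Subtype.ext (Subtype.ext h)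
        have h3 := e.injective h2
        rw [Fin.mk.injEq] at h3
        omega
      · intro x y hyx hr
        exact hsc x y hyx ⟨i.1, hi1⟩ ⟨i.1+1, hi2⟩ (by simp [Fin.le_def]) hr
    choose xx yy hlt hnot hyes using key
    have hFlt : ∀ i, tau (xx i) (yy i) < N := fun i => tau_lt_choose (hlt i)
    have hNpos : 0 < N := by
      have : 2 ≤ Fintype.card X := hn
      have h1 : (2:ℕ).choose 2 ≤ (Fintype.card X).choose 2 := Nat.choose_le_choose 2 this
      simpa [hN] using lt_of_lt_of_le (by norm_num : (0:ℕ) < (2:ℕ).choose 2) h1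
    set F : Fin (S.card - 1) → Fin N := fun i => ⟨tau (xx i) (yy i), hFlt i⟩ with hF
    have haux : ∀ i j : Fin (S.card - 1), i.1 < j.1 → F i ≠ F j := by
      intro i j hij hFeq
      have htau : tau (xx i) (yy i) = tau (xx j) (yy j) := by
        have := congrArg Fin.val hFeq
        simpa [hF] using this
      obtain ⟨hx, hy⟩ := tau_inj (hlt i) (hlt j) htau
      have hstep := hsc (xx i) (yy i) (hlt i) ⟨i.1+1, by omega⟩ ⟨j.1, by omega⟩
        (by simp [Fin.le_def]; omega) (hyes i)
      rw [hx, hy] at hstep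
      exact hnot j hstep
    have hFinj : Function.Injective F := by
      intro i j h
      by_contra hne
      rcases lt_trichotomy i.1 j.1 with h' | h' | h'
      · exact haux i j h' h
      · exact hne (Fin.ext h')
      · exact haux j i h' h.symm
    have hle := Fintype.card_le_of_injective F hFinj
    simp only [Fintype.card_fin] at hle
    omega
end

section
/- For any probability distribution ν over linear orders on a finite set X, the Möbius inverse q of the induced random choice rule p_ν satisfies q(x, A) = ν(L(x, A)) for every nonempty A ⊆ X and x ∈ A, where L(x, A) is the set of linear orders ≻ with z ≻ x ≻ y for all y ∈ A \ {x} and all z ∈ X \ A. -/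
open scoped Classical

variable {X : Type*} [Fintype X] [DecidableEq X]

lemma key {X : Type*} [Fintype X] [DecidableEq X]
    (r : X → X → Prop) (hr : IsStrictTotalOrder X r) (x : X) (A : Finset X) (hx : x ∈ A) :
    ∑ B ∈ Finset.univ.filter (fun B : Finset X => A ⊆ B),
        (-1 : ℝ) ^ ((B \ A).card) * pVec r (x, B) =
      if memL r x A then 1 else 0 := by
  classical
  have hre : ∑ B ∈ Finset.univ.filter (fun B : Finset X => A ⊆ B),
        (-1 : ℝ) ^ ((B \ A).card) * pVec r (x, B)
      = ∑ C ∈ Aᶜ.powerset, (-1 : ℝ) ^ C.card * pVec r (x, A ∪ C) := by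
    refine Finset.sum_nbij' (fun B => B \ A) (fun C => A ∪ C) ?_ ?_ ?_ ?_ ?_
    · intro B hB
      simp only [Finset.mem_powerset]
      intro z hz
      simp only [Finset.mem_sdiff] at hz
      simp [hz.2]
    · intro C hC
      simp only [Finset.mem_filter, Finset.mem_univ, true_and]
      exact Finset.subset_union_left
    · intro B hB
      simp only [Finset.mem_filter, Finset.mem_univ, true_and] at hB
      exact Finset.union_sdiff_of_subset hB
    · intro C hC
      simp only [Finset.mem_powerset] at hC
      apply Finset.union_sdiff_cancel_left
      rw [Finset.disjoint_left]
      intro a ha hC'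
      have := hC hC'
      simp at this
      exact this ha
    · intro B hB
      simp only [Finset.mem_filter, Finset.mem_univ, true_and] at hB
      rw [Finset.union_sdiff_of_subset hB]
  rw [hre]
  have hasymm : ∀ a b, r a b → ¬ r b a := fun a b hab hba =>
    hr.irrefl a (hr.trans _ _ _ hab hba)
  by_cases hmax : ∀ y ∈ A, y ≠ x → r x y
  · set S := Aᶜ.filter (fun z => r x z) with hS
    have hval : ∀ C ∈ Aᶜ.powerset, (-1:ℝ)^C.card * pVec r (x, A ∪ C)
        = if C ∈ S.powerset then (-1:ℝ)^C.card else 0 := by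
      intro C hC
      simp only [Finset.mem_powerset] at hC ⊢
      by_cases h : C ⊆ S
      · rw [if_pos h]
        have : pVec r (x, A ∪ C) = 1 := by
          rw [pVec, if_pos]
          refine ⟨Finset.mem_union_left _ hx, ?_⟩
          intro y hy hyx
          rcases Finset.mem_union.mp hy with h1 | h1
          · exact hmax y h1 hyx
          · exact (Finset.mem_filter.mp (h h1)).2
        rw [this, mul_one]
      · rw [if_neg h]
        have : pVec r (x, A ∪ C) = 0 := by
          rw [pVec, if_neg]
          rintro ⟨-, hall⟩
          apply h
          intro z hz
          have hzA : z ∉ A := by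
            have := hC hz; simpa using this
          have hzx : z ≠ x := fun e => hzA (e ▸ hx)
          exact Finset.mem_filter.mpr ⟨Finset.mem_compl.mpr hzA,
            hall z (Finset.mem_union_right _ hz) hzx⟩
        rw [this, mul_zero]
    rw [Finset.sum_congr rfl hval, Finset.sum_ite_mem]
    have hinter : Aᶜ.powerset ∩ S.powerset = S.powerset := by
      apply Finset.inter_eq_right.mpr
      apply Finset.powerset_mono.mpr
      exact Finset.filter_subset _ _
    rw [hinter]
    have hZ := Finset.sum_powerset_neg_one_pow_card (x := S)
    have hR : ∑ C ∈ S.powerset, (-1:ℝ)^C.card = if S = ∅ then 1 else 0 := by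
      by_cases h : S = ∅
      · simp [h]
      · rw [if_neg h]
        rw [if_neg h] at hZ
        exact_mod_cast hZ
    rw [hR]
    have hiff : S = ∅ ↔ memL r x A := by
      constructor
      · intro h
        refine ⟨hx, hmax, ?_⟩
        intro z hz
        have hzx : z ≠ x := fun e => hz (e ▸ hx)
        rcases (or_iff_not_imp_left.mpr fun h1 => or_iff_not_imp_right.mpr fun h2 => hr.trichotomous z x h1 h2 : r z x ∨ z = x ∨ r x z) with h1 | h1 | h1
        · exact h1
        · exact absurd h1 hzx
        · exfalso
          have : z ∈ S := Finset.mem_filter.mpr ⟨Finset.mem_compl.mpr hz, h1⟩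
          rw [h] at this; simp at this
      · rintro ⟨-, -, hbelow⟩
        rw [Finset.eq_empty_iff_forall_notMem]
        intro z hz
        rw [Finset.mem_filter, Finset.mem_compl] at hz
        exact hasymm z x (hbelow z hz.1) hz.2
    exact if_congr hiff rfl rfl
  · push_neg at hmax
    obtain ⟨y, hy, hyx, hnr⟩ := hmax
    have hmemL : ¬ memL r x A := fun h => hnr (h.2.1 y hy hyx)
    rw [if_neg hmemL]
    apply Finset.sum_eq_zero
    intro C hC
    have : pVec r (x, A ∪ C) = 0 := by
      rw [pVec, if_neg]
      rintro ⟨-, hall⟩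
      exact hnr (hall y (Finset.mem_union_left _ hy) hyx)
    rw [this, mul_zero]


/-- The Möbius inverse of an induced random choice rule satisfies
`q(x,A) = ν(L(x,A))`. -/
theorem stmt_10 (ν : Pref X → ℝ) (hpos : ∀ r, 0 ≤ ν r) (hsum : ∑ r, ν r = 1)
    (x : X) (A : Finset X) (hx : x ∈ A) :
    ∑ B ∈ Finset.univ.filter (fun B : Finset X => A ⊆ B),
        (-1 : ℝ) ^ ((B \ A).card) * (∑ r : Pref X, ν r * pVec r.1 (x, B)) =
      ∑ r ∈ Finset.univ.filter (fun r : Pref X => memL r.1 x A), ν r := by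
  classical
  have h1 : ∀ B ∈ Finset.univ.filter (fun B : Finset X => A ⊆ B),
      (-1:ℝ)^((B\A).card) * (∑ r : Pref X, ν r * pVec r.1 (x,B))
      = ∑ r : Pref X, ν r * ((-1:ℝ)^((B\A).card) * pVec r.1 (x,B)) := by
    intro B _
    rw [Finset.mul_sum]
    exact Finset.sum_congr rfl (fun r _ => by ring)
  rw [Finset.sum_congr rfl h1, Finset.sum_comm]
  have h2 : ∀ r : Pref X,
      ∑ B ∈ Finset.univ.filter (fun B : Finset X => A ⊆ B),
        ν r * ((-1:ℝ)^((B\A).card) * pVec r.1 (x,B))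
      = ν r * (if memL r.1 x A then 1 else 0) := by
    intro r
    rw [← Finset.mul_sum, key r.1 r.2 x A hx]
  rw [Finset.sum_congr rfl (fun r _ => h2 r)]
  rw [Finset.sum_filter]
  exact Finset.sum_congr rfl (fun r _ => by by_cases h : memL r.1 x A <;> simp [h])
end

section
/- A model M satisfies edge decomposability if and only if it satisfies sequential edge decomposability: for every nonempty subset N ⊆ M there exist ≻ ∈ N and (x, A) with N ∩ L(x, A) = {≻}, if and only if M can be enumerated as {≻_1, ..., ≻_k} such that for each i there is a pair (x, A) with {≻_i, ..., ≻_k} ∩ L(x, A) = {≻_i}. -/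
open scoped Classical

variable {X : Type*} [Fintype X] [DecidableEq X]

lemma aux_list : ∀ (n : ℕ) (M : Finset (Pref X)), M.card = n → EdgeDecomposable M →
    ∃ l : List (Pref X), l.Nodup ∧ (∀ r, r ∈ l ↔ r ∈ M) ∧
      ∀ i, i < l.length → ∃ (x : X) (A : Finset X), x ∈ A ∧
        ∀ j, ∀ hj : j < l.length, i ≤ j → (memL (l.get ⟨j, hj⟩).1 x A ↔ j = i) := by
  intro n
  induction n using Nat.strong_induction_on with
  | _ n ih =>
    intro M hcard hED
    rcases M.eq_empty_or_nonempty with rfl | hne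
    · exact ⟨[], List.nodup_nil, fun r => by simp, fun i hi => absurd hi (by simp)⟩
    · obtain ⟨r, hrM, x, A, hxA, hL⟩ := hED M subset_rfl hne
      set M' := M.erase r with hM'
      have hED' : EdgeDecomposable M' := fun N hN hNne =>
        hED N (hN.trans (Finset.erase_subset _ _)) hNne
      have hcard' : M'.card < n := by
        rw [← hcard]; exact Finset.card_erase_lt_of_mem hrM
      obtain ⟨l', hnd', hmem', hprop'⟩ := ih M'.card hcard' M' rfl hED'
      refine ⟨r :: l', ?_, ?_, ?_⟩
      · refine List.nodup_cons.mpr ⟨?_, hnd'⟩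
        intro hr
        exact (Finset.mem_erase.mp ((hmem' r).mp hr)).1 rfl
      · intro s
        simp only [List.mem_cons, hmem', hM', Finset.mem_erase]
        constructor
        · rintro (rfl | ⟨_, h⟩)
          · exact hrM
          · exact h
        · intro hs
          by_cases h : s = r
          · exact Or.inl h
          · exact Or.inr ⟨h, hs⟩
      · intro i hi
        match i with
        | 0 =>
          refine ⟨x, A, hxA, ?_⟩
          intro j hj _
          match j with
          | 0 => simpa using hL r hrM
          | Nat.succ j' =>
            have hjl : j' < l'.length := by simpa using hj
            have hmem : l'.get ⟨j', hjl⟩ ∈ M' := (hmem' _).mp (l'.get_mem ⟨j', hjl⟩)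
            have hne' : l'.get ⟨j', hjl⟩ ≠ r := (Finset.mem_erase.mp hmem).1
            simp only [List.get_eq_getElem] at hne'
            simp only [List.get_cons_succ]
            rw [hL _ ((Finset.mem_erase.mp hmem).2)]
            simp [hne']
        | Nat.succ i' =>
          have hil : i' < l'.length := by simpa using hi
          obtain ⟨x', A', hxA', hL'⟩ := hprop' i' hil
          refine ⟨x', A', hxA', ?_⟩
          intro j hj hij
          match j with
          | 0 => omega
          | Nat.succ j' =>
            have hjl : j' < l'.length := by simpa using hj
            simp only [List.get_cons_succ]
            rw [hL' j' hjl (by omega)]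
            omega

/-- Edge decomposability is equivalent to sequential edge decomposability. -/
theorem stmt_13 (M : Finset (Pref X)) :
    EdgeDecomposable M ↔
      ∃ e : Fin M.card ≃ {r // r ∈ M},
        ∀ i : Fin M.card, ∃ (x : X) (A : Finset X), x ∈ A ∧
          ∀ j : Fin M.card, i ≤ j → (memL ((e j) : Pref X).1 x A ↔ j = i) := by
  constructor
  · intro hED
    obtain ⟨l, hnd, hmem, hprop⟩ := aux_list M.card M rfl hED
    have hlen : M.card = l.length := by
      rw [← List.toFinset_card_of_nodup hnd]
      congr 1
      ext r; simp [hmem]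
    let e1 : Fin M.card ≃ Fin l.length := finCongr hlen
    let e2 : Fin l.length ≃ {x // x ∈ l} := hnd.getEquiv l
    let e3 : {x // x ∈ l} ≃ {r // r ∈ M} := Equiv.subtypeEquivRight hmem
    refine ⟨(e1.trans e2).trans e3, ?_⟩
    intro i
    obtain ⟨x, A, hxA, hL⟩ := hprop i.1 (hlen ▸ i.2)
    refine ⟨x, A, hxA, ?_⟩
    intro j hij
    have : (((e1.trans e2).trans e3 j : Pref X)) = l.get ⟨j.1, hlen ▸ j.2⟩ := rfl
    rw [this, hL j.1 (hlen ▸ j.2) hij]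
    constructor
    · intro h; exact Fin.ext h
    · intro h; exact congrArg Fin.val h
  · rintro ⟨e, he⟩
    intro N hN hNne
    obtain ⟨r0, hr0⟩ := hNne
    have hSne : ∃ i : Fin M.card, ((e i : Pref X)) ∈ N := by
      refine ⟨e.symm ⟨r0, hN hr0⟩, ?_⟩
      simp [hr0]
    classical
    let S : Finset (Fin M.card) := Finset.univ.filter (fun i => ((e i : Pref X)) ∈ N)
    have hSne' : S.Nonempty := by
      obtain ⟨i, hi⟩ := hSne
      exact ⟨i, by simp [S, hi]⟩
    let i := S.min' hSne'
    have hiS : i ∈ S := S.min'_mem hSne'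
    have hiN : ((e i : Pref X)) ∈ N := by simpa [S] using hiS
    obtain ⟨x, A, hxA, hL⟩ := he i
    refine ⟨(e i : Pref X), hiN, x, A, hxA, ?_⟩
    intro s hs
    set j : Fin M.card := e.symm ⟨s, hN hs⟩ with hj
    have hejs : ((e j : Pref X)) = s := by simp [hj]
    have hjS : j ∈ S := by simp [S, hejs, hs]
    have hij : i ≤ j := S.min'_le j hjS
    have := hL j hij
    rw [hejs] at this
    rw [this]
    constructor
    · intro h; rw [← hejs, h]
    · intro h
      have : e j = e i := Subtype.ext (by rw [hejs, h])
      exact e.injective this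
end

section
/- The two probability distributions ν₁ (uniform on {a≻b≻c≻d, b≻a≻d≻c}) and ν₂ (uniform on {a≻b≻d≻c, b≻a≻c≻d}) over linear orders on the four-element set {a, b, c, d} induce the same random choice rule: p_{ν₁}(x, A) = p_{ν₂}(x, A) for every nonempty A ⊆ {a,b,c,d} and x ∈ A. Consequently the model consisting of these four linear orders is not identified. -/
open scoped Classical

variable {X : Type*} [Fintype X] [DecidableEq X]

section Fishburn

/-- Rank functions for the four orders (lower rank = better).
Alternatives: `a = 0`, `b = 1`, `c = 2`, `d = 3`.
Row 0: `a ≻ b ≻ c ≻ d`; Row 1: `b ≻ a ≻ d ≻ c`;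
Row 2: `a ≻ b ≻ d ≻ c`; Row 3: `b ≻ a ≻ c ≻ d`. -/
def rk : Fin 4 → Fin 4 → Fin 4 :=
  ![![0, 1, 2, 3], ![1, 0, 3, 2], ![0, 1, 3, 2], ![1, 0, 2, 3]]

def fishburnPref (i : Fin 4) : Pref (Fin 4) :=
  ⟨fun x y => rk i x < rk i y,
   { trichotomous := fun a b h1 h2 => by
       have h : rk i a = rk i b := le_antisymm (not_lt.mp h2) (not_lt.mp h1)
       clear h1 h2
       revert h; fin_cases i <;> revert a b <;> decide
     irrefl := fun a => lt_irrefl _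
     trans := fun a b c h1 h2 => lt_trans h1 h2 }⟩

/-- The Fishburn model: the four orders above. -/
noncomputable def fishburnModel : Finset (Pref (Fin 4)) :=
  {fishburnPref 0, fishburnPref 1, fishburnPref 2, fishburnPref 3}

/-- `ν₁`: uniform on `a≻b≻c≻d` and `b≻a≻d≻c`. -/
noncomputable def ν₁ : Pref (Fin 4) → ℝ :=
  fun r => if r = fishburnPref 0 ∨ r = fishburnPref 1 then 1 / 2 else 0

/-- `ν₂`: uniform on `a≻b≻d≻c` and `b≻a≻c≻d`. -/
noncomputable def ν₂ : Pref (Fin 4) → ℝ :=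
  fun r => if r = fishburnPref 2 ∨ r = fishburnPref 3 then 1 / 2 else 0

lemma fp_ne {i j : Fin 4} (x y : Fin 4) (h1 : rk i x < rk i y)
    (h2 : ¬ rk j x < rk j y) : fishburnPref i ≠ fishburnPref j := by
  intro h
  have hv : (fishburnPref i).1 = (fishburnPref j).1 := congrArg Subtype.val h
  have h1' : (fishburnPref i).1 x y := h1
  rw [hv] at h1'
  exact h2 h1'

lemma ne01 : fishburnPref 0 ≠ fishburnPref 1 := fp_ne 0 1 (by decide) (by decide)
lemma ne02 : fishburnPref 0 ≠ fishburnPref 2 := fp_ne 2 3 (by decide) (by decide)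
lemma ne03 : fishburnPref 0 ≠ fishburnPref 3 := fp_ne 0 1 (by decide) (by decide)
lemma ne12 : fishburnPref 1 ≠ fishburnPref 2 := fp_ne 1 0 (by decide) (by decide)
lemma ne13 : fishburnPref 1 ≠ fishburnPref 3 := fp_ne 3 2 (by decide) (by decide)
lemma ne23 : fishburnPref 2 ≠ fishburnPref 3 := fp_ne 0 1 (by decide) (by decide)

def cnd (i : Fin 4) (x : Fin 4) (A : Finset (Fin 4)) : Prop :=
  x ∈ A ∧ ∀ y ∈ A, y ≠ x → rk i x < rk i y

instance (i x A) : Decidable (cnd i x A) := by unfold cnd; infer_instance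

lemma keyProp : ∀ (x : Fin 4) (A : Finset (Fin 4)),
    ((cnd 0 x A ∧ cnd 1 x A) ↔ (cnd 2 x A ∧ cnd 3 x A)) ∧
    ((cnd 0 x A ∨ cnd 1 x A) ↔ (cnd 2 x A ∨ cnd 3 x A)) := by decide

lemma pVec_eq (i : Fin 4) (x : Fin 4) (A : Finset (Fin 4)) :
    pVec (fishburnPref i).1 (x, A) = if cnd i x A then 1 else 0 := by
  unfold pVec cnd fishburnPref
  simp only []
  congr 1

lemma keyR (x : Fin 4) (A : Finset (Fin 4)) :
    pVec (fishburnPref 0).1 (x, A) + pVec (fishburnPref 1).1 (x, A)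
      = pVec (fishburnPref 2).1 (x, A) + pVec (fishburnPref 3).1 (x, A) := by
  have h := keyProp x A
  rw [pVec_eq, pVec_eq, pVec_eq, pVec_eq]
  by_cases h0 : cnd 0 x A <;> by_cases h1 : cnd 1 x A <;>
    by_cases h2 : cnd 2 x A <;> by_cases h3 : cnd 3 x A <;>
    simp [h0, h1, h2, h3] at h ⊢ <;> norm_num

lemma pRCR_fish (ν : Pref (Fin 4) → ℝ) (z : Fin 4 × Finset (Fin 4)) :
    pRCR fishburnModel ν z =
      ν (fishburnPref 0) * pVec (fishburnPref 0).1 z +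
      ν (fishburnPref 1) * pVec (fishburnPref 1).1 z +
      ν (fishburnPref 2) * pVec (fishburnPref 2).1 z +
      ν (fishburnPref 3) * pVec (fishburnPref 3).1 z := by
  unfold pRCR fishburnModel
  rw [Finset.sum_insert (by simp [ne01, ne02, ne03]),
      Finset.sum_insert (by simp [ne12, ne13]),
      Finset.sum_insert (by simp [ne23]), Finset.sum_singleton]
  ring

lemma pRCR_eq : pRCR fishburnModel ν₁ = pRCR fishburnModel ν₂ := by
  funext z
  obtain ⟨x, A⟩ := z
  rw [pRCR_fish, pRCR_fish]
  have e10 : ν₁ (fishburnPref 0) = 1 / 2 := if_pos (Or.inl rfl)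
  have e11 : ν₁ (fishburnPref 1) = 1 / 2 := if_pos (Or.inr rfl)
  have e12 : ν₁ (fishburnPref 2) = 0 := if_neg (by simp [ne02.symm, ne12.symm])
  have e13 : ν₁ (fishburnPref 3) = 0 := if_neg (by simp [ne03.symm, ne13.symm])
  have e20 : ν₂ (fishburnPref 0) = 0 := if_neg (by simp [ne02, ne03])
  have e21 : ν₂ (fishburnPref 1) = 0 := if_neg (by simp [ne12, ne13])
  have e22 : ν₂ (fishburnPref 2) = 1 / 2 := if_pos (Or.inl rfl)
  have e23 : ν₂ (fishburnPref 3) = 1 / 2 := if_pos (Or.inr rfl)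
  rw [e10, e11, e12, e13, e20, e21, e22, e23]
  have := keyR x A
  ring_nf
  linarith [keyR x A]

/-- `ν₁` and `ν₂` induce the same random choice rule, so the Fishburn
model is not identified. -/
theorem stmt_14 :
    (∀ (A : Finset (Fin 4)) (x : Fin 4), x ∈ A →
      pRCR fishburnModel ν₁ (x, A) = pRCR fishburnModel ν₂ (x, A)) ∧
    ¬ Identified fishburnModel := by
  constructor
  · intro A x _
    rw [pRCR_eq]
  · intro hid
    have hd1 : IsDist fishburnModel ν₁ := by
      refine ⟨fun r => ?_, fun r hr => ?_, ?_⟩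
      · unfold ν₁; split <;> norm_num
      · unfold ν₁
        rw [if_neg]
        rintro (rfl | rfl) <;>
          exact hr (by simp [fishburnModel])
      · unfold fishburnModel
        rw [Finset.sum_insert (by simp [ne01, ne02, ne03]),
            Finset.sum_insert (by simp [ne12, ne13]),
            Finset.sum_insert (by simp [ne23]), Finset.sum_singleton]
        have e10 : ν₁ (fishburnPref 0) = 1 / 2 := if_pos (Or.inl rfl)
        have e11 : ν₁ (fishburnPref 1) = 1 / 2 := if_pos (Or.inr rfl)
        have e12 : ν₁ (fishburnPref 2) = 0 := if_neg (by simp [ne02.symm, ne12.symm])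
        have e13 : ν₁ (fishburnPref 3) = 0 := if_neg (by simp [ne03.symm, ne13.symm])
        rw [e10, e11, e12, e13]; norm_num
    have hd2 : IsDist fishburnModel ν₂ := by
      refine ⟨fun r => ?_, fun r hr => ?_, ?_⟩
      · unfold ν₂; split <;> norm_num
      · unfold ν₂
        rw [if_neg]
        rintro (rfl | rfl) <;>
          exact hr (by simp [fishburnModel])
      · unfold fishburnModel
        rw [Finset.sum_insert (by simp [ne01, ne02, ne03]),
            Finset.sum_insert (by simp [ne12, ne13]),
            Finset.sum_insert (by simp [ne23]), Finset.sum_singleton]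
        have e20 : ν₂ (fishburnPref 0) = 0 := if_neg (by simp [ne02, ne03])
        have e21 : ν₂ (fishburnPref 1) = 0 := if_neg (by simp [ne12, ne13])
        have e22 : ν₂ (fishburnPref 2) = 1 / 2 := if_pos (Or.inl rfl)
        have e23 : ν₂ (fishburnPref 3) = 1 / 2 := if_pos (Or.inr rfl)
        rw [e20, e21, e22, e23]; norm_num
    have h := hid ν₁ ν₂ hd1 hd2 pRCR_eq
    have h0 : ν₁ (fishburnPref 0) = ν₂ (fishburnPref 0) := by rw [h]
    have e10 : ν₁ (fishburnPref 0) = 1 / 2 := if_pos (Or.inl rfl)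
    have e20 : ν₂ (fishburnPref 0) = 0 := if_neg (by simp [ne02, ne03])
    rw [e10, e20] at h0
    norm_num at h0

end Fishburn
end

section
/- A set M of linear orders on a finite set X satisfies minimal mutual agreement (every two orders in M agree on at least one ordered pair) if and only if M contains no linear order together with its reverse. Consequently, the maximal cardinality of such a set is n!/2, where n = |X| ≥ 2. -/
open scoped Classical

variable {X : Type*} [Fintype X] [DecidableEq X]

/-- `M` satisfies minimal mutual agreement: every two orders in `M` agree on
at least one ordered pair. -/
def MMA (M : Finset (Pref X)) : Prop :=
  ∀ r ∈ M, ∀ s ∈ M, ∃ x y : X, r.1 x y ∧ s.1 x y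

/-- `s` is the reverse of `r`. -/
def IsReverse (r s : Pref X) : Prop := ∀ x y : X, r.1 x y ↔ s.1 y x

set_option linter.unusedSectionVars false in
def Pref.rev (r : Pref X) : Pref X :=
  ⟨flip r.1, by haveI := r.2; exact IsStrictTotalOrder.swap r.1⟩

noncomputable def prefRank (r : Pref X) : X ≃ Fin (Fintype.card X) :=
  haveI := r.2
  letI : LinearOrder X := linearOrderOfSTO r.1
  ((monoEquivOfFin X rfl).symm : X ≃o Fin _).toEquiv

lemma prefRank_lt (r : Pref X) (x y : X) :
    (prefRank r x < prefRank r y ↔ r.1 x y) := by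
  haveI := r.2
  letI : LinearOrder X := linearOrderOfSTO r.1
  exact (monoEquivOfFin X rfl).symm.lt_iff_lt

lemma prefRank_injective : Function.Injective (prefRank (X := X)) := by
  intro r s h
  apply Subtype.ext
  funext x y
  apply propext
  rw [← prefRank_lt r x y, ← prefRank_lt s x y, h]

noncomputable def permToPref (e : X ≃ Fin (Fintype.card X)) : Pref X :=
  ⟨fun x y => e x < e y,
    { trichotomous := fun a b => by
        rcases lt_trichotomy (e a) (e b) with h | h | h
        · intro h1; exact absurd h h1
        · intro _ _; exact e.injective h
        · intro _ h2; exact absurd h h2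
      irrefl := fun a => lt_irrefl _
      trans := fun a b c => lt_trans }⟩

lemma permToPref_injective : Function.Injective (permToPref (X := X)) := by
  intro e e' h
  have key : ∀ x y : X, (e x < e y ↔ e' x < e' y) := fun x y =>
    iff_of_eq (congrFun (congrFun (congrArg Subtype.val h) x) y)
  have hmono : StrictMono (fun i => e (e'.symm i)) := by
    intro i j hij
    have := (key (e'.symm i) (e'.symm j)).mpr (by simpa using hij)
    exact this
  have hsurj : Function.Surjective (fun i => e (e'.symm i)) :=
    e.surjective.comp e'.symm.surjective
  have hrange : Set.range (fun i => e (e'.symm i)) = Set.range (id : Fin _ → Fin _) := by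
    rw [hsurj.range_eq, Set.range_id]
  have hid : (fun i => e (e'.symm i)) = id := by
    haveI : WellFoundedLT (Fin (Fintype.card X)) := inferInstance
    exact (StrictMono.range_inj (f := fun i => e (e'.symm i))
      (g := (id : Fin (Fintype.card X) → Fin (Fintype.card X))) hmono strictMono_id).mp hrange
  apply Equiv.ext
  intro x
  have := congrFun hid (e' x)
  simpa using this

lemma card_pref : Fintype.card (Pref X) = Nat.factorial (Fintype.card X) := by
  have h1 : Fintype.card (Pref X) ≤ Fintype.card (X ≃ Fin (Fintype.card X)) :=
    Fintype.card_le_of_injective _ prefRank_injective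
  have h2 : Fintype.card (X ≃ Fin (Fintype.card X)) ≤ Fintype.card (Pref X) :=
    Fintype.card_le_of_injective _ permToPref_injective
  have : Fintype.card (X ≃ Fin (Fintype.card X)) = Nat.factorial (Fintype.card X) := by
    rw [Fintype.card_equiv (Fintype.equivFin X)]
  omega

lemma pref_asymm (r : Pref X) {x y : X} (h1 : r.1 x y) (h2 : r.1 y x) : False := by
  haveI := r.2
  exact irrefl x (_root_.trans h1 h2)

lemma pref_ne (r : Pref X) {x y : X} (h : r.1 x y) : x ≠ y := by
  haveI := r.2
  rintro rfl
  exact irrefl x h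

lemma pref_total (r : Pref X) {x y : X} (h : x ≠ y) : r.1 x y ∨ r.1 y x := by
  haveI := r.2
  rcases trichotomous_of r.1 x y with h1 | h1 | h1
  · exact Or.inl h1
  · exact absurd h1 h
  · exact Or.inr h1

lemma mma_iff (M : Finset (Pref X)) :
    MMA M ↔ ∀ r ∈ M, ∀ s ∈ M, ¬ IsReverse r s := by
  constructor
  · intro hM r hr s hs hrev
    obtain ⟨x, y, h1, h2⟩ := hM r hr s hs
    exact pref_asymm s ((hrev x y).mp h1) h2
  · intro h r hr s hs
    by_contra hno
    push_neg at hno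
    apply h r hr s hs
    intro x y
    constructor
    · intro hxy
      rcases pref_total s (pref_ne r hxy) with h1 | h1
      · exact absurd h1 (hno x y hxy)
      · exact h1
    · intro hyx
      rcases pref_total r (pref_ne s hyx).symm with h1 | h1
      · exact h1
      · exact absurd hyx (hno y x h1)

lemma rev_rev (r : Pref X) : r.rev.rev = r := Subtype.ext rfl

lemma rev_injective : Function.Injective (Pref.rev (X := X)) :=
  Function.LeftInverse.injective rev_rev

lemma isReverse_rev (r : Pref X) : IsReverse r r.rev := fun _ _ => Iff.rfl

lemma card_le_of_mma {M : Finset (Pref X)} (hM : MMA M) :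
    2 * M.card ≤ Nat.factorial (Fintype.card X) := by
  have hdisj : Disjoint M (M.image Pref.rev) := by
    rw [Finset.disjoint_right]
    intro s hs hsM
    obtain ⟨r, hr, rfl⟩ := Finset.mem_image.mp hs
    exact (mma_iff M).mp hM r hr r.rev hsM (isReverse_rev r)
  have hcard : (M ∪ M.image Pref.rev).card = 2 * M.card := by
    rw [Finset.card_union_of_disjoint hdisj,
      Finset.card_image_of_injective _ rev_injective]
    omega
  calc 2 * M.card = (M ∪ M.image Pref.rev).card := hcard.symm
    _ ≤ Fintype.card (Pref X) := Finset.card_le_univ _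
    _ = Nat.factorial (Fintype.card X) := card_pref

/-- Minimal mutual agreement holds iff `M` contains no order together with its
reverse; consequently the maximal cardinality of such a model is `n! / 2`. -/
theorem stmt_15 (hn : 2 ≤ Fintype.card X) :
    (∀ M : Finset (Pref X),
      (MMA M ↔ ∀ r ∈ M, ∀ s ∈ M, ¬ IsReverse r s)) ∧
    IsGreatest {k | ∃ M : Finset (Pref X), MMA M ∧ M.card = k}
      (Nat.factorial (Fintype.card X) / 2) := by
  refine ⟨mma_iff, ?_, ?_⟩
  · -- membership: construct a witness
    obtain ⟨a, b, hab⟩ := Fintype.exists_pair_of_one_lt_card hn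
    set M₀ : Finset (Pref X) := Finset.univ.filter (fun r => r.1 a b) with hM₀
    have hmma : MMA M₀ := by
      intro r hr s hs
      exact ⟨a, b, (Finset.mem_filter.mp hr).2, (Finset.mem_filter.mp hs).2⟩
    have hsum : M₀.card + (Finset.univ.filter (fun r : Pref X => ¬ r.1 a b)).card
        = Fintype.card (Pref X) := by
      rw [hM₀, Finset.card_filter_add_card_filter_not, Finset.card_univ]
    have himg : M₀.image Pref.rev = Finset.univ.filter (fun r : Pref X => ¬ r.1 a b) := by
      ext s
      simp only [Finset.mem_image, Finset.mem_filter, Finset.mem_univ, true_and, hM₀]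
      constructor
      · rintro ⟨r, hr, rfl⟩
        intro hc
        exact pref_asymm r hr hc
      · intro hs
        refine ⟨s.rev, ?_, rev_rev s⟩
        show s.1 b a
        rcases pref_total s hab with h | h
        · exact absurd h hs
        · exact h
    have hcard2 : 2 * M₀.card = Fintype.card (Pref X) := by
      have h1 := Finset.card_image_of_injective M₀ rev_injective
      rw [himg] at h1
      omega
    have hc := card_pref (X := X)
    exact ⟨M₀, hmma, by omega⟩
  · rintro k ⟨M, hM, rfl⟩
    have := card_le_of_mma hM
    omega
end

section
/- Let X be a finite set with a linear order ▷, and let (≻_1, ..., ≻_n) with n ≥ 2 be a sequence of distinct linear orders on X satisfying the single-crossing property with respect to ▷. Then there exists a pair (x, A) with x ∈ A ⊆ X such that L(x, A) ∩ {≻_1, ..., ≻_n} = {≻_1}. -/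
open scoped Classical

variable {X : Type*} [Fintype X] [DecidableEq X]

/-- For a single-crossing sequence of distinct preferences, some `L(x,A)`
picks out exactly the first preference. -/
theorem stmt_16 [LinearOrder X] (n : ℕ) (hn : 2 ≤ n)
    (e : Fin n → Pref X) (hinj : Function.Injective e)
    (hsc : ∀ x y : X, y < x → ∀ i j : Fin n, i ≤ j → (e i).1 x y → (e j).1 x y) :
    ∃ (x : X) (A : Finset X), x ∈ A ∧
      ∀ i : Fin n, (memL (e i).1 x A ↔ i = ⟨0, by omega⟩) := by
  classical
  set i0 : Fin n := ⟨0, by omega⟩ with hi0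
  set i1 : Fin n := ⟨1, by omega⟩ with hi1
  have htri : ∀ (i : Fin n) (a b : X), (e i).1 a b ∨ a = b ∨ (e i).1 b a :=
    fun i a b => by
      by_cases h1 : (e i).1 a b
      · exact Or.inl h1
      by_cases h2 : (e i).1 b a
      · exact Or.inr (Or.inr h2)
      exact Or.inr (Or.inl ((e i).2.trichotomous a b h1 h2))
  have hirr : ∀ (i : Fin n) (a : X), ¬ (e i).1 a a := fun i a => (e i).2.irrefl a
  have hasym : ∀ (i : Fin n) (a b : X), (e i).1 a b → ¬ (e i).1 b a := by
    intro i a b h1 h2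
    exact hirr i a ((e i).2.trans _ _ _ h1 h2)
  have hne : e i0 ≠ e i1 := by
    intro h
    have := hinj h
    simp [i0, i1, Fin.ext_iff] at this
  -- find a crossing pair
  obtain ⟨a, b, hab0, hab1⟩ : ∃ a b : X, (e i0).1 a b ∧ (e i1).1 b a := by
    by_contra hc
    push_neg at hc
    apply hne
    apply Subtype.ext
    funext a b
    have key : (e i0).1 a b ↔ (e i1).1 a b := by
      constructor
      · intro h
        have hne' : a ≠ b := fun h' => hirr i0 a (h' ▸ h)
        rcases htri i1 a b with h1 | h1 | h1
        · exact h1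
        · exact absurd h1 hne'
        · exact absurd h1 (hc a b h)
      · intro h
        have hne' : a ≠ b := fun h' => hirr i1 a (h' ▸ h)
        rcases htri i0 a b with h1 | h1 | h1
        · exact h1
        · exact absurd h1 hne'
        · exact absurd h (hc b a h1)
    simp [key]
  have hab : a ≠ b := fun h => hirr i0 a (h ▸ hab0)
  -- must have a < b in the reference order
  have haltb : a < b := by
    rcases lt_trichotomy a b with h | h | h
    · exact h
    · exact absurd h hab
    · exact absurd (hsc a b h i0 i1 (by simp [i0, i1, Fin.le_def]) hab0)
        (hasym i1 b a hab1)
  -- all later orders rank b above a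
  have hlater : ∀ i : Fin n, i ≠ i0 → (e i).1 b a := by
    intro i hi
    have h1i : i1 ≤ i := by
      have : i.1 ≠ 0 := fun h => hi (Fin.ext h)
      simp only [i1, Fin.le_def]
      omega
    exact hsc b a haltb i1 i h1i hab1
  refine ⟨a, Finset.univ.filter (fun z => z = a ∨ (e i0).1 a z), by simp, ?_⟩
  intro i
  constructor
  · intro ⟨_, h2, _⟩
    by_contra hi
    have hbA : b ∈ Finset.univ.filter (fun z => z = a ∨ (e i0).1 a z) := by
      simp [hab0]
    exact hasym i b a (hlater i hi) (h2 b hbA (Ne.symm hab))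
  · rintro rfl
    refine ⟨by simp, ?_, ?_⟩
    · intro y hy hya
      simp only [Finset.mem_filter] at hy
      rcases hy.2 with h | h
      · exact absurd h hya
      · exact h
    · intro z hz
      simp only [Finset.mem_filter, Finset.mem_univ, true_and, not_or] at hz
      rcases htri i0 z a with h | h | h
      · exact h
      · exact absurd h hz.1
      · exact absurd h hz.2
end

section
/- For each linear order ▷ on a finite set X with |X| = n, the CARUM model M(▷) consisting of the n cyclic shifts of ▷ is edge decomposable. Specifically, for each x ∈ X there is exactly one order in M(▷) ranking x first, so L(x, X) ∩ M(▷) is a singleton for every x, and every nonempty subset of M(▷) likewise contains an order uniquely picked out by some pair (x, A). -/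
open scoped Classical

variable {X : Type*} [Fintype X] [DecidableEq X]

/-- The cyclic shift of the natural order on `Fin n` starting at `m`:
`m ≻ m+1 ≻ ⋯ ≻ n-1 ≻ 0 ≻ ⋯ ≻ m-1`. -/
def shiftPref (n : ℕ) [NeZero n] (m : Fin n) : Pref (Fin n) :=
  ⟨fun x y => (x - m).val < (y - m).val,
   { trichotomous := fun a b h1 h2 => by
       rcases lt_trichotomy (a - m).val (b - m).val with h | h | h
       · exact absurd h h1
       · exact (by have := Fin.ext h; exact sub_left_injective this)
       · exact absurd h h2
     irrefl := fun a => lt_irrefl _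
     trans := fun a b c h1 h2 => lt_trans h1 h2 }⟩

/-- The CARUM model: the `n` cyclic shifts of the natural order on `Fin n`. -/
noncomputable def carum (n : ℕ) [NeZero n] : Finset (Pref (Fin n)) :=
  Finset.univ.image (shiftPref n)


lemma memL_shift_univ (n : ℕ) [NeZero n] (m x : Fin n) :
    memL (shiftPref n m).1 x (Finset.univ : Finset (Fin n)) ↔ x = m := by
  constructor
  · rintro ⟨-, h, -⟩
    by_contra hx
    have h2 : (x - m).val < ((m : Fin n) - m).val :=
      h m (Finset.mem_univ _) (fun e => hx e.symm)
    rw [sub_self] at h2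
    simp at h2
  · rintro rfl
    refine ⟨Finset.mem_univ _, fun y _ hy => ?_, fun z hz => absurd (Finset.mem_univ z) hz⟩
    show (x - x).val < (y - x).val
    rw [sub_self]
    simp only [Fin.val_zero]
    refine Nat.pos_of_ne_zero (fun e => hy ?_)
    have : y - x = 0 := Fin.ext e
    exact sub_eq_zero.mp this

lemma shiftPref_inj (n : ℕ) [NeZero n] : Function.Injective (shiftPref n) := by
  intro a b h
  have ha := (memL_shift_univ n a a).mpr rfl
  rw [h] at ha
  exact (memL_shift_univ n b a).mp ha

/-- For each `x` there is exactly one order in the CARUM model ranking `x`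
first, and the CARUM model is edge decomposable. -/
theorem stmt_18 (n : ℕ) [NeZero n] :
    (∀ x : Fin n, ∃! r : Pref (Fin n),
        r ∈ carum n ∧ memL r.1 x (Finset.univ : Finset (Fin n))) ∧
    EdgeDecomposable (carum n) := by
  constructor
  · intro x
    refine ⟨shiftPref n x, ⟨Finset.mem_image_of_mem _ (Finset.mem_univ _),
      (memL_shift_univ n x x).mpr rfl⟩, ?_⟩
    rintro r ⟨hr, hm⟩
    obtain ⟨m, -, rfl⟩ := Finset.mem_image.mp hr
    rw [(memL_shift_univ n m x).mp hm]
  · rintro N hN ⟨r0, hr0⟩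
    obtain ⟨m, -, rfl⟩ := Finset.mem_image.mp (hN hr0)
    refine ⟨shiftPref n m, hr0, m, Finset.univ, Finset.mem_univ _, ?_⟩
    intro s hs
    obtain ⟨m', -, rfl⟩ := Finset.mem_image.mp (hN hs)
    rw [memL_shift_univ]
    constructor
    · rintro rfl; rfl
    · intro h; exact (shiftPref_inj n h).symm
end
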